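/- If a family F of subgroups of G in general position admits, for each index j, an element g_j lying in the intersection of all members of F except the j-th but not in the intersection of all members, then {g_1, ..., g_k} is an irredundant subset of G of size k = |F|; consequently MaxDim(G) ≤ i(G). -/

import Mathlib

/-- A finite subset of a group is irredundant if no element lies in the
subgroup generated by the remaining elements. -/
def Irredundant {G : Type*} [Group G] (s : Finset G) : Prop :=
  ∀ g ∈ s, g ∉ Subgroup.closure ((s : Set G) \ {g})

/-- `mRank G` : maximal size of an irredundant generating set of `G`. -/
noncomputable def mRank (G : Type*) [Group G] : ℕ :=
  sSup {n | ∃ s : Finset G, Irredundant s ∧ Subgroup.closure (s : Set G) = ⊤ ∧ s.card = n}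

/-- `iRank G` : maximal size of an irredundant subset of `G`. -/
noncomputable def iRank (G : Type*) [Group G] : ℕ :=
  sSup {n | ∃ s : Finset G, Irredundant s ∧ s.card = n}

/-- A family of subgroups is in general position. -/
def GenPos {G : Type*} [Group G] {ι : Type*} (H : ι → Subgroup G) : Prop :=
  ∀ I J : Finset ι, I ⊂ J → (⨅ j ∈ J, H j) < (⨅ i ∈ I, H i)

/-- Maximal size of a family of maximal subgroups in general position. -/
noncomputable def MaxDim (G : Type*) [Group G] : ℕ :=
  sSup {k | ∃ M : Fin k → Subgroup G, (∀ j, IsCoatom (M j)) ∧ GenPos M}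

/-!
If `g j` lies in every member of the family except `F j`, then the subgroup generated by the
other `g i` lies in `F j` while `g j` does not, so the `g j` are distinct and irredundant. In a
family in general position, removing one index strictly enlarges the intersection, which provides
such elements; hence every such family yields an irredundant set of the same size.
-/

section Separating

variable {G ι : Type*} [Group G]

lemma mem_iff_ne_of_mem_iInf_compl [Fintype ι] [DecidableEq ι] {F : ι → Subgroup G}
    {g : ι → G}
    (hg : ∀ j, g j ∈ (⨅ i ∈ ({j}ᶜ : Finset ι), F i) ∧ g j ∉ ⨅ i, F i) (i j : ι) :
    g i ∈ F j ↔ j ≠ i := by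
  have hmem : ∀ i j, j ≠ i → g i ∈ F j := fun i j hji => by
    simpa using Subgroup.mem_iInf.mp (Subgroup.mem_iInf.mp (hg i).1 j) (by simpa using hji)
  refine ⟨fun hi hji => (hg i).2 (Subgroup.mem_iInf.mpr fun l => ?_), hmem i j⟩
  by_cases hl : l = i
  · subst hl hji
    exact hi
  · exact hmem i l hl

variable {F : ι → Subgroup G} {g : ι → G}

lemma injective_of_mem_iff_ne (hF : ∀ i j, g i ∈ F j ↔ j ≠ i) : Function.Injective g := by
  intro i j hij
  by_contra hne
  exact ((hF i i).mp (hij ▸ (hF j i).mpr hne)) rfl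

lemma irredundant_image_of_mem_iff_ne [Fintype ι] [DecidableEq G]
    (hF : ∀ i j, g i ∈ F j ↔ j ≠ i) :
    Irredundant (Finset.image g Finset.univ) := by
  rintro _ hx
  obtain ⟨j, -, rfl⟩ := Finset.mem_image.mp hx
  have hothers : ((Finset.image g Finset.univ : Finset G) : Set G) \ {g j} ⊆ F j := by
    rintro _ ⟨hx, hij⟩
    obtain ⟨i, -, rfl⟩ := Finset.mem_image.mp hx
    exact (hF i j).mpr fun hji => hij (hji ▸ rfl)
  exact fun hcl => (hF j j).mp ((Subgroup.closure_le _).mpr hothers hcl) rfl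

lemma GenPos.exists_mem_iInf_compl_not_mem_iInf [Fintype ι] [DecidableEq ι] (hF : GenPos F)
    (j : ι) :
    ∃ x, x ∈ (⨅ i ∈ ({j}ᶜ : Finset ι), F i) ∧ x ∉ ⨅ i, F i := by
  have hlt := hF {j}ᶜ Finset.univ (Finset.ssubset_univ_iff.mpr fun h => by
    simpa using h.ge (Finset.mem_univ j))
  simp only [Finset.mem_univ, iInf_pos] at hlt
  exact SetLike.exists_of_lt hlt

end Separating

lemma Irredundant.card_le_iRank {G : Type*} [Group G] [Finite G] {s : Finset G}
    (hs : Irredundant s) :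
    s.card ≤ iRank G := by
  have := Fintype.ofFinite G
  refine le_csSup ⟨Fintype.card G, ?_⟩ ⟨s, hs, rfl⟩
  rintro _ ⟨t, -, rfl⟩
  exact t.card_le_univ

lemma GenPos.card_le_iRank {G ι : Type*} [Group G] [Finite G] [Fintype ι] [DecidableEq ι]
    {F : ι → Subgroup G} (hF : GenPos F) : Fintype.card ι ≤ iRank G := by
  classical
  choose g hg using hF.exists_mem_iInf_compl_not_mem_iInf
  have hmem := mem_iff_ne_of_mem_iInf_compl hg
  calc Fintype.card ι = (Finset.image g Finset.univ).card :=
        (Finset.card_image_of_injective _ (injective_of_mem_iff_ne hmem)).symm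
    _ ≤ iRank G := (irredundant_image_of_mem_iff_ne hmem).card_le_iRank

lemma maxDim_le_iRank (G : Type*) [Group G] [Finite G] : MaxDim G ≤ iRank G := by
  refine csSup_le ⟨0, Fin.elim0, fun j => j.elim0, fun I J hIJ => ?_⟩ ?_
  · exact absurd hIJ (by simp [Subsingleton.elim I J])
  · rintro n ⟨M, -, hM⟩
    simpa using hM.card_le_iRank

theorem stmt19_general {G : Type*} [Group G] [Finite G] [DecidableEq G] (k : ℕ)
    (F : Fin k → Subgroup G) (g : Fin k → G)
    (hg : ∀ j, g j ∈ (⨅ i ∈ ({j}ᶜ : Finset (Fin k)), F i) ∧ g j ∉ ⨅ i, F i) :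
    Irredundant (Finset.image g Finset.univ) ∧
    (Finset.image g Finset.univ).card = k ∧
    MaxDim G ≤ iRank G := by
  have hmem := mem_iff_ne_of_mem_iInf_compl hg
  refine ⟨irredundant_image_of_mem_iff_ne hmem, ?_, maxDim_le_iRank G⟩
  rw [Finset.card_image_of_injective _ (injective_of_mem_iff_ne hmem), Finset.card_univ,
    Fintype.card_fin]

theorem stmt19 {G : Type*} [Group G] [Finite G] [DecidableEq G] (k : ℕ)
    (F : Fin k → Subgroup G) (hgp : GenPos F) (g : Fin k → G)
    (hg : ∀ j, g j ∈ (⨅ i ∈ ({j}ᶜ : Finset (Fin k)), F i) ∧ g j ∉ ⨅ i, F i) :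
    Irredundant (Finset.image g Finset.univ) ∧
    (Finset.image g Finset.univ).card = k ∧
    MaxDim G ≤ iRank G :=
  stmt19_general k F g hg
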